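/- arXiv:2211.10398 — 8 statements merged into one kernel-verified Lean document; each statement's English description precedes it below -/
import Mathlib

section
/- The function x ↦ ln((1 - e^(-x))/x) is convex on the domain (0, ∞). -/
open Real Set Filter

private lemma one_sub_exp_neg_pos {x : ℝ} (hx : 0 < x) : 0 < 1 - Real.exp (-x) := by
  have : Real.exp (-x) < 1 := Real.exp_lt_one_iff.mpr (by linarith)
  linarith

private lemma key_ineq {x : ℝ} (hx : 0 < x) :
    Real.exp (-x) * x ^ 2 ≤ (1 - Real.exp (-x)) ^ 2 := by
  have hs : x / 2 < Real.sinh (x / 2) := Real.self_lt_sinh_iff.mpr (by linarith)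
  rw [Real.sinh_eq] at hs
  have hb : (0 : ℝ) < Real.exp (-(x / 2)) := Real.exp_pos _
  have hab : Real.exp (x / 2) * Real.exp (-(x / 2)) = 1 := by
    rw [← Real.exp_add]; simp
  have hbb : Real.exp (-(x / 2)) * Real.exp (-(x / 2)) = Real.exp (-x) := by
    rw [← Real.exp_add]; ring_nf
  -- x < exp(x/2) - exp(-(x/2)), multiply by exp(-(x/2)) > 0
  have h1 : x * Real.exp (-(x / 2)) ≤ 1 - Real.exp (-x) := by
    nlinarith [hs, hb, hab, hbb]
  have h0 : 0 ≤ x * Real.exp (-(x / 2)) := by positivity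
  nlinarith [sq_nonneg (x * Real.exp (-(x / 2))), h1, h0, hbb]

theorem convexOn_log_one_sub_exp_neg_div :
    ConvexOn ℝ (Set.Ioi (0 : ℝ)) (fun x => Real.log ((1 - Real.exp (-x)) / x)) := by
  have hD : Convex ℝ (Set.Ioi (0 : ℝ)) := convex_Ioi 0
  set f' : ℝ → ℝ := fun x => Real.exp (-x) / (1 - Real.exp (-x)) - x⁻¹ with hf'def
  set f'' : ℝ → ℝ := fun x => 1 / x ^ 2 - Real.exp (-x) / (1 - Real.exp (-x)) ^ 2 with hf''def
  have hexp : ∀ x : ℝ, HasDerivAt (fun y => Real.exp (-y)) (-Real.exp (-x)) x := by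
    intro x
    have := (Real.hasDerivAt_exp (-x)).comp x (hasDerivAt_neg x)
    simpa [mul_comm, Function.comp_def] using this
  have hden : ∀ x : ℝ, HasDerivAt (fun y => 1 - Real.exp (-y)) (Real.exp (-x)) x := by
    intro x
    simpa using (hexp x).const_sub 1
  have hcont : ContinuousOn (fun x => Real.log ((1 - Real.exp (-x)) / x)) (Set.Ioi (0 : ℝ)) := by
    apply ContinuousOn.log
    · exact ((continuous_const.sub (Real.continuous_exp.comp continuous_neg)).continuousOn.div
        continuousOn_id (fun x hx => ne_of_gt hx))
    · intro x hx
      exact ne_of_gt (div_pos (one_sub_exp_neg_pos hx) hx)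
  apply convexOn_of_hasDerivWithinAt2_nonneg hD hcont (f' := f') (f'' := f'')
  · intro x hx
    rw [interior_Ioi] at hx
    have hx0 : (0 : ℝ) < x := hx
    have h1 : HasDerivAt (fun y => Real.log (1 - Real.exp (-y)))
        (Real.exp (-x) / (1 - Real.exp (-x))) x :=
      (hden x).log (ne_of_gt (one_sub_exp_neg_pos hx0))
    have h2 : HasDerivAt Real.log x⁻¹ x := Real.hasDerivAt_log (ne_of_gt hx0)
    have hg : HasDerivAt (fun y => Real.log (1 - Real.exp (-y)) - Real.log y) (f' x) x :=
      h1.sub h2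
    have heq : (fun y => Real.log ((1 - Real.exp (-y)) / y)) =ᶠ[nhds x]
        (fun y => Real.log (1 - Real.exp (-y)) - Real.log y) := by
      filter_upwards [Ioi_mem_nhds hx0] with y hy
      exact Real.log_div (ne_of_gt (one_sub_exp_neg_pos hy)) (ne_of_gt hy)
    exact ((hg.congr_of_eventuallyEq heq).hasDerivWithinAt)
  · intro x hx
    rw [interior_Ioi] at hx
    have hx0 : (0 : ℝ) < x := hx
    have hne : 1 - Real.exp (-x) ≠ 0 := ne_of_gt (one_sub_exp_neg_pos hx0)
    have hA : HasDerivAt (fun y => Real.exp (-y) / (1 - Real.exp (-y)))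
        ((-Real.exp (-x) * (1 - Real.exp (-x)) - Real.exp (-x) * Real.exp (-x)) /
          (1 - Real.exp (-x)) ^ 2) x :=
      (hexp x).div (hden x) hne
    have hB : HasDerivAt (fun y : ℝ => y⁻¹) (-(x ^ 2)⁻¹) x := hasDerivAt_inv (ne_of_gt hx0)
    have h := hA.sub hB
    have heq : (-Real.exp (-x) * (1 - Real.exp (-x)) - Real.exp (-x) * Real.exp (-x)) /
          (1 - Real.exp (-x)) ^ 2 - -(x ^ 2)⁻¹ = f'' x := by
      rw [hf''def]
      have hx2 : x ^ 2 ≠ 0 := pow_ne_zero 2 (ne_of_gt hx0)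
      have h2 : ((1 : ℝ) - Real.exp (-x)) ^ 2 ≠ 0 := pow_ne_zero 2 hne
      field_simp
      ring
    rw [heq] at h
    exact h.hasDerivWithinAt
  · intro x hx
    rw [interior_Ioi] at hx
    have hx0 : (0 : ℝ) < x := hx
    have h1e := one_sub_exp_neg_pos hx0
    rw [hf''def, sub_nonneg, div_le_div_iff₀ (by positivity) (by positivity)]
    have := key_ineq hx0
    nlinarith [this]
end

section
/- For all x ≥ 0, e^(-x) + x·e^(-x/2) ≤ 1. -/
theorem exp_neg_add_mul_exp_neg_half_le_one (x : ℝ) (hx : 0 ≤ x) :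
    Real.exp (-x) + x * Real.exp (-x / 2) ≤ 1 := by
  have h : x / 2 ≤ Real.sinh (x / 2) := Real.self_le_sinh_iff.mpr (by linarith)
  rw [Real.sinh_eq] at h
  have he : Real.exp (-(x / 2)) * Real.exp (x / 2) = 1 := by
    rw [← Real.exp_add]; ring_nf; exact Real.exp_zero
  have hx2 : Real.exp (-x) = Real.exp (-(x / 2)) * Real.exp (-(x / 2)) := by
    rw [← Real.exp_add]; ring_nf
  have hp : 0 < Real.exp (-(x / 2)) := Real.exp_pos _
  have hq : Real.exp (-x / 2) = Real.exp (-(x / 2)) := by ring_nf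
  rw [hq, hx2]
  nlinarith [mul_le_mul_of_nonneg_left h hp.le]
end

section
/- For every ρ > 0, the sum e^(-2ρ)·(Σ_{t ≥ 0 even} (2ρ)^t/(t!·(t+1)) + Σ_{t ≥ 1 odd} (2ρ)^t/(t!·(t+2))) equals 1/(2ρ) - (1 - e^(-4ρ))/(8ρ²). -/
open Real Finset

lemma hexp (y : ℝ) : HasSum (fun n : ℕ => y ^ n / n.factorial) (Real.exp y) := by
  rw [Real.exp_eq_exp_ℝ]
  exact NormedSpace.expSeries_div_hasSum_exp y

lemma hodd (x : ℝ) :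
    HasSum (fun n : ℕ => if Odd n then x ^ n / n.factorial else 0) (Real.sinh x) := by
  have h := ((hexp x).sub (hexp (-x))).div_const 2
  rw [Real.sinh_eq]
  convert h using 2 with n
  · rfl
  rcases Nat.even_or_odd n with he | ho
  · simp [Nat.not_odd_iff_even.2 he, he.neg_pow]
  · rw [if_pos ho, ho.neg_pow]; ring

lemma heven (x : ℝ) :
    HasSum (fun n : ℕ => if Even n then x ^ n / n.factorial else 0) (Real.cosh x) := by
  have h := ((hexp x).add (hexp (-x))).div_const 2
  rw [Real.cosh_eq]
  convert h using 2 with n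
  · rfl
  rcases Nat.even_or_odd n with he | ho
  · rw [if_pos he, he.neg_pow]; ring
  · rw [if_neg (Nat.not_even_iff_odd.2 ho), ho.neg_pow]; ring

lemma hS1 (x : ℝ) (hx : x ≠ 0) :
    HasSum (fun t : ℕ => if Even t then x ^ t / (t + 1).factorial else 0)
      (Real.sinh x / x) := by
  have h := ((hasSum_nat_add_iff' (f := fun n : ℕ =>
      if Odd n then x ^ n / n.factorial else 0) 1).2 (hodd x)).div_const x
  simp only [Finset.sum_range_one] at h
  norm_num at h
  convert h using 2 with n
  · rfl
  rcases Nat.even_or_odd n with he | ho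
  · rw [if_pos he, if_pos (he.add_one)]
    rw [pow_succ]
    field_simp
  · rw [if_neg (Nat.not_even_iff_odd.2 ho),
      if_neg (Nat.not_odd_iff_even.2 (Nat.even_add_one.2 (Nat.not_even_iff_odd.2 ho)))]
    simp

lemma hA (x : ℝ) (hx : x ≠ 0) :
    HasSum (fun t : ℕ => if Odd t then x ^ t / (t + 1).factorial else 0)
      ((Real.cosh x - 1) / x) := by
  have h := ((hasSum_nat_add_iff' (f := fun n : ℕ =>
      if Even n then x ^ n / n.factorial else 0) 1).2 (heven x)).div_const x
  simp only [Finset.sum_range_one] at h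
  norm_num at h
  convert h using 2 with n
  · rfl
  rcases Nat.even_or_odd n with he | ho
  · rw [if_neg (Nat.not_odd_iff_even.2 he),
      if_neg (fun h' => (Nat.even_add_one.1 h') he)]
    simp
  · rw [if_pos ho, if_pos (Nat.even_add_one.2 (Nat.not_even_iff_odd.2 ho))]
    rw [pow_succ]
    field_simp

lemma hB (x : ℝ) (hx : x ≠ 0) :
    HasSum (fun t : ℕ => if Odd t then x ^ t / (t + 2).factorial else 0)
      ((Real.sinh x - x) / x ^ 2) := by
  have h := ((hasSum_nat_add_iff' (f := fun n : ℕ =>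
      if Odd n then x ^ n / n.factorial else 0) 2).2 (hodd x)).div_const (x ^ 2)
  have hs : ∑ i ∈ Finset.range 2, (if Odd i then x ^ i / (i.factorial : ℝ) else 0) = x := by
    simp [Finset.sum_range_succ]
  rw [hs] at h
  convert h using 2 with n
  · rfl
  rcases Nat.even_or_odd n with he | ho
  · rw [if_neg (Nat.not_odd_iff_even.2 he),
      if_neg (by have := Nat.even_iff.1 he; simp [Nat.odd_iff, Nat.add_mod]; omega
        : ¬ Odd (n + 2))]
    simp
  · rw [if_pos ho, if_pos (by simp [Nat.odd_iff, Nat.add_mod] at ho ⊢; omega : Odd (n + 2))]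
    rw [pow_add]
    field_simp

theorem pairing_probability_closed_form (ρ : ℝ) (hρ : 0 < ρ) :
    Real.exp (-(2 * ρ)) *
      ((∑' t : ℕ, if Even t then (2 * ρ) ^ t / ((Nat.factorial t : ℝ) * (t + 1)) else 0)
        + (∑' t : ℕ, if Odd t then (2 * ρ) ^ t / ((Nat.factorial t : ℝ) * (t + 2)) else 0))
      = 1 / (2 * ρ) - (1 - Real.exp (-(4 * ρ))) / (8 * ρ ^ 2) := by
  set x : ℝ := 2 * ρ with hxdef
  have hx0 : 0 < x := by positivity
  have hx : x ≠ 0 := ne_of_gt hx0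
  have e1 : (∑' t : ℕ, if Even t then x ^ t / ((Nat.factorial t : ℝ) * (t + 1)) else 0)
      = Real.sinh x / x := by
    rw [← (hS1 x hx).tsum_eq]
    refine tsum_congr fun t => ?_
    congr 1
    have h1 : ((t + 1).factorial : ℝ) = (t.factorial : ℝ) * (t + 1) := by
      rw [Nat.factorial_succ]; push_cast; ring
    rw [h1]
  have e2 : (∑' t : ℕ, if Odd t then x ^ t / ((Nat.factorial t : ℝ) * (t + 2)) else 0)
      = (Real.cosh x - 1) / x - (Real.sinh x - x) / x ^ 2 := by
    rw [← ((hA x hx).sub (hB x hx)).tsum_eq]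
    refine tsum_congr fun t => ?_
    by_cases ho : Odd t
    · simp only [if_pos ho]
      have h1 : ((t + 1).factorial : ℝ) = (t.factorial : ℝ) * (t + 1) := by
        rw [Nat.factorial_succ]; push_cast; ring
      have h2 : ((t + 2).factorial : ℝ) = (t.factorial : ℝ) * (t + 1) * (t + 2) := by
        show ((t + 1 + 1).factorial : ℝ) = _
        rw [Nat.factorial_succ, Nat.factorial_succ]; push_cast; ring
      have hf : (t.factorial : ℝ) ≠ 0 := Nat.cast_ne_zero.2 t.factorial_ne_zero
      have ht1 : (t : ℝ) + 1 ≠ 0 := by positivity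
      have ht2 : (t : ℝ) + 2 ≠ 0 := by positivity
      rw [h1, h2]
      field_simp
      ring
    · simp [ho]
  rw [e1, e2, Real.sinh_eq, Real.cosh_eq]
  have hE : Real.exp (-x) = (Real.exp x)⁻¹ := Real.exp_neg x
  have hE4 : Real.exp (-(4 * ρ)) = (Real.exp x)⁻¹ * (Real.exp x)⁻¹ := by
    rw [← Real.exp_neg, ← Real.exp_add, hxdef]; ring_nf
  have hEne : Real.exp x ≠ 0 := Real.exp_ne_zero x
  rw [hE, hE4, hxdef]
  have hρ' : ρ ≠ 0 := ne_of_gt hρ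
  field_simp
  ring
end

section
/- The supremum of g(m, y) = (m·(1 + (1-m)y)² + (1-m)·((1-m)y)²) / (m + (1-m)y²) over m ∈ (0,1] and y ∈ [0,1] equals 4/3, and the supremum is attained at m = 1/3, y = 1/2. -/
noncomputable def gRatio (m y : ℝ) : ℝ :=
  (m * (1 + (1 - m) * y) ^ 2 + (1 - m) * ((1 - m) * y) ^ 2) / (m + (1 - m) * y ^ 2)

theorem sup_gRatio_eq_four_thirds :
    IsGreatest {z : ℝ | ∃ m ∈ Set.Ioc (0 : ℝ) 1, ∃ y ∈ Set.Icc (0 : ℝ) 1, z = gRatio m y}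
      (4 / 3) ∧ gRatio (1 / 3) (1 / 2) = 4 / 3 := by
  have hval : gRatio (1 / 3) (1 / 2) = 4 / 3 := by
    unfold gRatio; norm_num
  refine ⟨⟨⟨1/3, by norm_num, 1/2, by norm_num, hval.symm⟩, ?_⟩, hval⟩
  rintro z ⟨m, ⟨hm0, hm1⟩, y, ⟨hy0, hy1⟩, rfl⟩
  have hden : 0 < m + (1 - m) * y ^ 2 := by nlinarith [sq_nonneg y]
  rw [gRatio, div_le_div_iff₀ hden (by norm_num : (0:ℝ) < 3)]
  rcases eq_or_lt_of_le hm1 with h1 | h1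
  · subst h1; nlinarith
  · have hA : 0 < (1 - m) * (1 + 3 * m) := by nlinarith
    nlinarith [sq_nonneg (2*(1-m)*(1+3*m)*y - 6*m*(1-m)),
      mul_nonneg (mul_nonneg hm0.le (sub_nonneg.2 hm1)) (sq_nonneg (3*m - 1)), hA]
end

section
/- For any m ∈ (0,1) and y ∈ (0,1), if the partial derivatives of g(m,y) = (m·(1+(1-m)y)² + (1-m)·((1-m)y)²)/(m + (1-m)y²) with respect to both m and y vanish, then m = 1/3 and y = 1/2. -/
theorem critical_point_unique (m y : ℝ) (hm : m ∈ Set.Ioo (0 : ℝ) 1)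
    (hy : y ∈ Set.Ioo (0 : ℝ) 1)
    (hdm : deriv (fun m' => gRatio m' y) m = 0)
    (hdy : deriv (fun y' => gRatio m y') y = 0) :
    m = 1 / 3 ∧ y = 1 / 2 := by
  obtain ⟨hm0, hm1⟩ := hm
  obtain ⟨hy0, hy1⟩ := hy
  have hD : m + (1 - m) * y ^ 2 > 0 := by nlinarith
  -- derivative in m
  have hu : HasDerivAt (fun m' : ℝ => 1 + (1 - m') * y) (-y) m := by
    have : HasDerivAt (fun m' : ℝ => 1 + (1 - m') * y) (0 + (0 - 1) * y) m :=
      (hasDerivAt_const m (1:ℝ)).add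
        (((hasDerivAt_const m (1:ℝ)).sub (hasDerivAt_id m)).mul_const y)
    simpa using this
  have hv : HasDerivAt (fun m' : ℝ => (1 - m') * y) (-y) m := by
    have : HasDerivAt (fun m' : ℝ => (1 - m') * y) ((0 - 1) * y) m :=
      ((hasDerivAt_const m (1:ℝ)).sub (hasDerivAt_id m)).mul_const y
    simpa using this
  have hNm : HasDerivAt
      (fun m' : ℝ => m' * (1 + (1 - m') * y) ^ 2 + (1 - m') * ((1 - m') * y) ^ 2)
      (1 * (1 + (1 - m) * y) ^ 2 + m * (2 * (1 + (1 - m) * y) ^ 1 * (-y))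
        + ((0 - 1) * ((1 - m) * y) ^ 2 + (1 - m) * (2 * ((1 - m) * y) ^ 1 * (-y)))) m := by
    exact ((hasDerivAt_id m).mul (hu.pow 2)).add
      (((hasDerivAt_const m (1:ℝ)).sub (hasDerivAt_id m)).mul (hv.pow 2))
  have hDm : HasDerivAt (fun m' : ℝ => m' + (1 - m') * y ^ 2) (1 + (0 - 1) * y ^ 2) m :=
    (hasDerivAt_id m).add (((hasDerivAt_const m (1:ℝ)).sub (hasDerivAt_id m)).mul_const (y ^ 2))
  have hgm : HasDerivAt (fun m' : ℝ => gRatio m' y)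
      (((1 * (1 + (1 - m) * y) ^ 2 + m * (2 * (1 + (1 - m) * y) ^ 1 * (-y))
        + ((0 - 1) * ((1 - m) * y) ^ 2 + (1 - m) * (2 * ((1 - m) * y) ^ 1 * (-y))))
        * (m + (1 - m) * y ^ 2)
        - (m * (1 + (1 - m) * y) ^ 2 + (1 - m) * ((1 - m) * y) ^ 2) * (1 + (0 - 1) * y ^ 2))
        / (m + (1 - m) * y ^ 2) ^ 2) m := by
    exact hNm.div hDm hD.ne'
  have E1 : ((1 * (1 + (1 - m) * y) ^ 2 + m * (2 * (1 + (1 - m) * y) ^ 1 * (-y))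
        + ((0 - 1) * ((1 - m) * y) ^ 2 + (1 - m) * (2 * ((1 - m) * y) ^ 1 * (-y))))
        * (m + (1 - m) * y ^ 2)
        - (m * (1 + (1 - m) * y) ^ 2 + (1 - m) * ((1 - m) * y) ^ 2) * (1 + (0 - 1) * y ^ 2))
        = 0 := by
    have h0 := hgm.deriv
    rw [hdm] at h0
    have := (div_eq_zero_iff.mp h0.symm)
    rcases this with h | h
    · exact h
    · exact absurd h (by positivity)
  -- derivative in y
  have hu' : HasDerivAt (fun y' : ℝ => 1 + (1 - m) * y') (1 - m) y := by
    have : HasDerivAt (fun y' : ℝ => 1 + (1 - m) * y') (0 + (1 - m) * 1) y :=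
      (hasDerivAt_const y (1:ℝ)).add ((hasDerivAt_id y).const_mul (1 - m))
    simpa using this
  have hv' : HasDerivAt (fun y' : ℝ => (1 - m) * y') (1 - m) y := by
    have : HasDerivAt (fun y' : ℝ => (1 - m) * y') ((1 - m) * 1) y :=
      (hasDerivAt_id y).const_mul (1 - m)
    simpa using this
  have hNy : HasDerivAt
      (fun y' : ℝ => m * (1 + (1 - m) * y') ^ 2 + (1 - m) * ((1 - m) * y') ^ 2)
      (m * (2 * (1 + (1 - m) * y) ^ 1 * (1 - m))
        + (1 - m) * (2 * ((1 - m) * y) ^ 1 * (1 - m))) y := by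
    exact ((hu'.pow 2).const_mul m).add ((hv'.pow 2).const_mul (1 - m))
  have hDy : HasDerivAt (fun y' : ℝ => m + (1 - m) * y' ^ 2)
      ((1 - m) * (2 * y)) y := by
    have := ((hasDerivAt_pow 2 y).const_mul (1 - m))
    simpa using this
  have hgy : HasDerivAt (fun y' : ℝ => gRatio m y')
      (((m * (2 * (1 + (1 - m) * y) ^ 1 * (1 - m))
        + (1 - m) * (2 * ((1 - m) * y) ^ 1 * (1 - m))) * (m + (1 - m) * y ^ 2)
        - (m * (1 + (1 - m) * y) ^ 2 + (1 - m) * ((1 - m) * y) ^ 2)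
          * ((1 - m) * (2 * y)))
        / (m + (1 - m) * y ^ 2) ^ 2) y := by
    exact hNy.div hDy hD.ne'
  have E2 : ((m * (2 * (1 + (1 - m) * y) ^ 1 * (1 - m))
        + (1 - m) * (2 * ((1 - m) * y) ^ 1 * (1 - m))) * (m + (1 - m) * y ^ 2)
        - (m * (1 + (1 - m) * y) ^ 2 + (1 - m) * ((1 - m) * y) ^ 2)
          * ((1 - m) * (2 * y))) = 0 := by
    have h0 := hgy.deriv
    rw [hdy] at h0
    rcases div_eq_zero_iff.mp h0.symm with h | h
    · exact h
    · exact absurd h (by positivity)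
  -- algebra
  have f1 : y * (2 - y) * ((y * (1 - m) - m) * (y * (1 - m) + m)) = 0 := by
    linear_combination E1
  have h1 : y * (1 - m) = m := by
    rcases mul_eq_zero.mp f1 with h | h
    · rcases mul_eq_zero.mp h with h | h <;> nlinarith
    · rcases mul_eq_zero.mp h with h | h
      · linarith
      · nlinarith
  have f2 : 2 * m * (1 - m) * (m * (1 - y) - y ^ 2 * (1 - m)) = 0 := by
    linear_combination E2
  have h2 : m * (1 - y) = y ^ 2 * (1 - m) := by
    rcases mul_eq_zero.mp f2 with h | h
    · rcases mul_eq_zero.mp h with h | h <;> nlinarith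
    · linarith
  have f3 : m * (1 - 2 * y) = 0 := by linear_combination y * h1 + h2
  have hyv : y = 1 / 2 := by
    rcases mul_eq_zero.mp f3 with h | h
    · linarith
    · linarith
  refine ⟨?_, hyv⟩
  rw [hyv] at h1
  linarith
end

section
/- With α = 0.3, β = 12.1 and η = 0.1561, for every r ≥ β - α, the quantity Q°(r) defined in the paper satisfies Q°(r) ≥ 0.1·r, where Q°(r) = (η/ln(1+β))·((1+α+r)·ln((1+β)(1+r)/(1+α+r)) - (β-α)) for r ∈ (β-α, β], and Q°(r) = (η/ln(1+β))·(α - β(1+r)/(1+β) + (1+α+r)·ln((1+β)(1+r)/(1+α+r))) for r > β. -/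
lemma log_131_lb : (2.5725:ℝ) ≤ Real.log 13.1 := by
  rw [Real.le_log_iff_exp_le (by norm_num)]
  have hsplit : Real.exp 2.5725 = Real.exp 1 * Real.exp 1 * Real.exp 0.5725 := by
    rw [← Real.exp_add, ← Real.exp_add]; norm_num
  have he1 : Real.exp 1 < 2.7182818286 := Real.exp_one_lt_d9
  have he0 : (0:ℝ) < Real.exp 1 := Real.exp_pos 1
  have hb : Real.exp 0.5725 ≤ (∑ m ∈ Finset.range 8, (0.5725:ℝ) ^ m / m.factorial) +
      (0.5725:ℝ) ^ 8 * (8 + 1) / (Nat.factorial 8 * 8) :=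
    Real.exp_bound' (by norm_num) (by norm_num) (by norm_num)
  have hb2 : Real.exp 0.5725 ≤ 1.77269327 := by
    refine hb.trans ?_
    simp [Finset.sum_range_succ, Nat.factorial]
    norm_num
  rw [hsplit]
  nlinarith [Real.exp_pos (0.5725:ℝ)]

noncomputable def Qcirc (r : ℝ) : ℝ :=
  let α : ℝ := 0.3
  let β : ℝ := 12.1
  let η : ℝ := 0.1561
  if r ≤ β then
    η / Real.log (1 + β) *
      ((1 + α + r) * Real.log ((1 + β) * (1 + r) / (1 + α + r)) - (β - α))
  else
    η / Real.log (1 + β) *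
      (α - β * (1 + r) / (1 + β) + (1 + α + r) * Real.log ((1 + β) * (1 + r) / (1 + α + r)))

theorem Qcirc_ge_linear : ∀ r : ℝ, (12.1 : ℝ) - 0.3 ≤ r → 0.1 * r ≤ Qcirc r := by
  intro r hr
  have hr' : (11.8:ℝ) ≤ r := by linarith
  have h1 : (0:ℝ) < 1 + r := by linarith
  have h2 : (0:ℝ) < 1 + 0.3 + r := by linarith
  have hL := log_131_lb
  have hL0 : (0:ℝ) < Real.log 13.1 := by linarith
  set L := Real.log 13.1 with hLdef
  set a := Real.log (1 + r) with ha
  set b := Real.log (1 + 0.3 + r) with hb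
  have hlog : Real.log (13.1 * (1 + r) / (1 + 0.3 + r)) = L + a - b := by
    rw [Real.log_div (by positivity) (by positivity),
      Real.log_mul (by norm_num) (by positivity)]
  have hGlb : a ≤ b := Real.log_le_log h1 (by linarith)
  have hGub : b - a ≤ 0.3 / (1 + r) := by
    have : b - a = Real.log ((1 + 0.3 + r) / (1 + r)) := by
      rw [Real.log_div (by positivity) (by positivity)]
    rw [this]
    have := Real.log_le_sub_one_of_pos (show (0:ℝ) < (1 + 0.3 + r) / (1 + r) by positivity)
    calc Real.log ((1 + 0.3 + r) / (1 + r)) ≤ (1 + 0.3 + r) / (1 + r) - 1 := this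
      _ = 0.3 / (1 + r) := by field_simp; ring
  have hGprod : (1 + 0.3 + r) * (b - a) ≤ 0.3 + 0.09 / (1 + r) := by
    have h3 : (1 + 0.3 + r) * (b - a) ≤ (1 + 0.3 + r) * (0.3 / (1 + r)) :=
      mul_le_mul_of_nonneg_left hGub (by linarith)
    have h4 : (1 + 0.3 + r) * (0.3 / (1 + r)) = 0.3 + 0.09 / (1 + r) := by
      field_simp; ring
    linarith
  have hinv : (0.09:ℝ) / (1 + r) ≤ 9 / 1280 := by
    have : (9:ℝ)/1280 = 0.09/12.8 := by norm_num
    rw [this]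
    apply div_le_div_of_nonneg_left (by norm_num) (by norm_num) (by linarith)
  have hcoef : (0.1561 * (1 + 0.3 + r) - 0.1 * r) * 2.5725
      ≤ (0.1561 * (1 + 0.3 + r) - 0.1 * r) * L :=
    mul_le_mul_of_nonneg_left hL (by linarith)
  unfold Qcirc
  simp only []
  have h131 : (1:ℝ) + 12.1 = 13.1 := by norm_num
  rw [h131]
  split_ifs with hcase
  · rw [div_mul_eq_mul_div, le_div_iff₀ hL0]
    have hA : (1 + 0.3 + r) * Real.log (13.1 * (1 + r) / (1 + 0.3 + r)) =
        (1 + 0.3 + r) * (L + a - b) := by rw [hlog]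
    rw [hA]
    linarith [hcoef, hGprod, hinv]
  · rw [div_mul_eq_mul_div, le_div_iff₀ hL0]
    have hA : (1 + 0.3 + r) * Real.log (13.1 * (1 + r) / (1 + 0.3 + r)) =
        (1 + 0.3 + r) * (L + a - b) := by rw [hlog]
    rw [hA]
    have hinv' : (0.09:ℝ) / (1 + r) ≤ 9 / 1310 := by
      have : (9:ℝ)/1310 = 0.09/13.1 := by norm_num
      rw [this]
      apply div_le_div_of_nonneg_left (by norm_num) (by norm_num) (by linarith)
    have e1 : (12.1:ℝ) * (1 + r) / 13.1 = (121/131) * (1 + r) := by ring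
    rw [e1]
    linarith [hcoef, hGprod, hinv']
end

section
/- Let η > 0, β > 0, α ≥ 0. Then for r ∈ [0, β - α], the expected value over ρ (where ln ρ is uniform on [0, ln(1+β))) of the integral ∫₀^{1+α+r} 1(1 < h_ρ(1+r)/(1+β) < y)·dy, multiplied by η, equals (η/ln(1+β))·((1+α+r)·ln(1+r) - r), where h_ρ(t) is the smallest number of the form ρ(1+β)^j (j an integer) that is at least t. -/
open MeasureTheory

/-- `hGrid β ρ t` is the smallest number of the form `ρ * (1+β)^j` (`j : ℤ`)
that is at least `t`, for `β > 0`, `ρ ≥ 1` and `t > 0`. -/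
noncomputable def hGrid (β ρ t : ℝ) : ℝ :=
  ρ * (1 + β) ^ (⌈Real.logb (1 + β) (t / ρ)⌉ : ℤ)

theorem Qcirc_closed_form_first_case (η β α : ℝ) (hη : 0 < η) (hβ : 0 < β) (hα : 0 ≤ α) :
    ∀ r ∈ Set.Icc (0 : ℝ) (β - α),
      η * ((Real.log (1 + β))⁻¹ *
        ∫ ρ in Set.Ico (1 : ℝ) (1 + β),
          (∫ y in Set.Ioo (0 : ℝ) (1 + α + r),
            (if 1 < hGrid β ρ (1 + r) / (1 + β) ∧ hGrid β ρ (1 + r) / (1 + β) < y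
              then (1 : ℝ) else 0)) / ρ)
      = η / Real.log (1 + β) * ((1 + α + r) * Real.log (1 + r) - r) := by
  rintro r ⟨hr0, hr1⟩
  have hβ1 : (1:ℝ) < 1 + β := by linarith
  have hrβ : 1 + r ≤ 1 + β := by linarith
  set c : ℝ := 1 + α + r with hc
  have hrc : 1 + r ≤ c := by simp [hc]; linarith
  -- hGrid on (1, 1+r)
  have step1 : ∀ ρ ∈ Set.Ioo (1:ℝ) (1+r), hGrid β ρ (1+r) = ρ * (1+β) := by
    rintro ρ ⟨h1, h2⟩
    have hρ0 : (0:ℝ) < ρ := by linarith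
    have hx1 : 1 < (1+r)/ρ := (one_lt_div hρ0).2 h2
    have hx2 : (1+r)/ρ ≤ 1+β := by
      rw [div_le_iff₀ hρ0]; nlinarith
    have hceil : ⌈Real.logb (1+β) ((1+r)/ρ)⌉ = 1 := by
      rw [Int.ceil_eq_iff]
      constructor
      · push_cast; simpa using Real.logb_pos hβ1 hx1
      · push_cast
        calc Real.logb (1+β) ((1+r)/ρ) ≤ Real.logb (1+β) (1+β) :=
              Real.logb_le_logb_of_le hβ1 (by positivity) hx2
          _ = 1 := Real.logb_self_eq_one hβ1
    rw [hGrid, hceil, zpow_one]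
  -- hGrid on [1+r, 1+β)
  have step2 : ∀ ρ : ℝ, 1 + r ≤ ρ → ρ < 1 + β → hGrid β ρ (1+r) = ρ := by
    intro ρ h1 h2
    have hρ0 : (0:ℝ) < ρ := by linarith
    have hx1 : (1+r)/ρ ≤ 1 := by rw [div_le_one hρ0]; linarith
    have hx0 : 0 < (1+r)/ρ := div_pos (by linarith) hρ0
    have hxlo : (1+β)⁻¹ < (1+r)/ρ := by
      rw [lt_div_iff₀ hρ0]
      have hip : 0 < (1+β)⁻¹ := by positivity
      have h3 := mul_lt_mul_of_pos_left h2 hip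
      rw [inv_mul_cancel₀ (by linarith : (1:ℝ)+β ≠ 0)] at h3
      linarith
    have hceil : ⌈Real.logb (1+β) ((1+r)/ρ)⌉ = 0 := by
      rw [Int.ceil_eq_iff]
      constructor
      · push_cast
        have := Real.logb_lt_logb hβ1 (by positivity) hxlo
        rw [Real.logb_inv, Real.logb_self_eq_one hβ1] at this
        linarith
      · push_cast; exact Real.logb_nonpos hβ1 (le_of_lt hx0) hx1
    rw [hGrid, hceil, zpow_zero, mul_one]
  -- a.e. congruence of the outer integrand with an indicator
  have key : (∫ ρ in Set.Ico (1:ℝ) (1+β),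
      (∫ y in Set.Ioo (0:ℝ) c,
        (if 1 < hGrid β ρ (1+r) / (1+β) ∧ hGrid β ρ (1+r) / (1+β) < y
          then (1:ℝ) else 0)) / ρ)
      = ∫ ρ in Set.Ico (1:ℝ) (1+β),
          (Set.Ioo (1:ℝ) (1+r)).indicator (fun ρ => (c - ρ)/ρ) ρ := by
    apply MeasureTheory.setIntegral_congr_ae measurableSet_Ico
    have hae1 : ∀ᵐ ρ : ℝ, ρ ≠ 1 := by
      rw [MeasureTheory.ae_iff]
      have : {x : ℝ | ¬ x ≠ 1} = {1} := by ext x; simp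
      rw [this]; exact Real.volume_singleton
    filter_upwards [hae1] with ρ hρ1 hmem
    obtain ⟨hm1, hm2⟩ := hmem
    rcases lt_or_ge ρ (1+r) with hlt | hge
    · have hρIoo : ρ ∈ Set.Ioo (1:ℝ) (1+r) := ⟨lt_of_le_of_ne hm1 (Ne.symm hρ1), hlt⟩
      have hϱ : hGrid β ρ (1+r) / (1+β) = ρ := by
        rw [step1 ρ hρIoo, mul_div_assoc, div_self (by linarith), mul_one]
      rw [hϱ, Set.indicator_of_mem hρIoo]
      have hfun : (fun y => if 1 < ρ ∧ ρ < y then (1:ℝ) else 0)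
          = (Set.Ioi ρ).indicator (fun _ => (1:ℝ)) := by
        funext y
        by_cases h : ρ < y
        · simp [Set.indicator, h, hρIoo.1]
        · simp [Set.indicator, h]
      have : (∫ y in Set.Ioo (0:ℝ) c,
          (if 1 < ρ ∧ ρ < y then (1:ℝ) else 0)) = c - ρ := by
        rw [hfun, MeasureTheory.setIntegral_indicator measurableSet_Ioi]
        have hset : Set.Ioo (0:ℝ) c ∩ Set.Ioi ρ = Set.Ioo ρ c := by
          ext x
          simp only [Set.mem_inter_iff, Set.mem_Ioo, Set.mem_Ioi]
          constructor
          · rintro ⟨⟨_, h2⟩, h3⟩; exact ⟨h3, h2⟩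
          · rintro ⟨h1, h2⟩; exact ⟨⟨by linarith [hρIoo.1], h2⟩, h1⟩
        rw [hset, MeasureTheory.setIntegral_const, measureReal_def, Real.volume_Ioo, smul_eq_mul, mul_one,
          ENNReal.toReal_ofReal (by linarith [hρIoo.2])]
      rw [this]
    · have hϱ : hGrid β ρ (1+r) / (1+β) = ρ / (1+β) := by rw [step2 ρ hge hm2]
      have hlt1 : ρ / (1+β) < 1 := (div_lt_one (by linarith)).2 hm2
      have hzero : (∫ y in Set.Ioo (0:ℝ) c,
          (if 1 < hGrid β ρ (1+r) / (1+β) ∧ hGrid β ρ (1+r) / (1+β) < y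
            then (1:ℝ) else 0)) = 0 := by
        rw [hϱ]
        have : (fun y => if 1 < ρ/(1+β) ∧ ρ/(1+β) < y then (1:ℝ) else 0) = fun _ => (0:ℝ) := by
          funext y; rw [if_neg]; rintro ⟨h1, _⟩; linarith
        rw [this, MeasureTheory.integral_zero]
      rw [hzero, zero_div, Set.indicator_of_notMem]
      rintro ⟨h1, h2⟩; linarith
  rw [key, MeasureTheory.setIntegral_indicator measurableSet_Ioo]
  have hset : Set.Ico (1:ℝ) (1+β) ∩ Set.Ioo 1 (1+r) = Set.Ioo 1 (1+r) := by
    ext x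
    simp only [Set.mem_inter_iff, Set.mem_Ico, Set.mem_Ioo]
    constructor
    · rintro ⟨_, h⟩; exact h
    · rintro ⟨h1, h2⟩; exact ⟨⟨le_of_lt h1, by linarith⟩, h1, h2⟩
  rw [hset]
  have hint : (∫ ρ in Set.Ioo (1:ℝ) (1+r), (c - ρ)/ρ) = c * Real.log (1+r) - r := by
    rw [← MeasureTheory.integral_Ioc_eq_integral_Ioo,
      ← intervalIntegral.integral_of_le (by linarith : (1:ℝ) ≤ 1 + r)]
    have hcongr : ∀ x ∈ Set.uIcc (1:ℝ) (1+r), (c - x)/x = c * (1/x) - 1 := by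
      intro x hx
      rw [Set.uIcc_of_le (by linarith)] at hx
      have : (0:ℝ) < x := by linarith [hx.1]
      field_simp
    rw [intervalIntegral.integral_congr hcongr]
    have hi1 : IntervalIntegrable (fun x => c * (1/x)) volume 1 (1+r) := by
      apply ContinuousOn.intervalIntegrable
      apply ContinuousOn.mul continuousOn_const
      apply ContinuousOn.div continuousOn_const continuousOn_id
      intro x hx
      rw [Set.uIcc_of_le (by linarith)] at hx
      simp only [id_eq]
      intro h; rw [h] at hx; exact absurd hx.1 (by norm_num)
    rw [intervalIntegral.integral_sub hi1 intervalIntegrable_const,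
      intervalIntegral.integral_const_mul, integral_one_div, intervalIntegral.integral_const]
    · simp
    · rw [Set.uIcc_of_le (by linarith)]
      rintro ⟨h1, _⟩; linarith
  rw [hint, div_eq_mul_inv]
  ring
end

section
/- Let X be a nonnegative integer random variable and define φ(X) = 1/(X+1) if X is even and 1/(X+2) if X is odd. If X is stochastically dominated by Y ~ Pois(λ), then E[φ(X)] ≥ E[φ(Y)] = 1/λ - (1 - e^(-2λ))/(2λ²). -/
open MeasureTheory

noncomputable def phiPair (t : ℕ) : ℝ :=
  if Even t then 1 / ((t : ℝ) + 1) else 1 / ((t : ℝ) + 2)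

lemma phiPair_nonneg (t : ℕ) : 0 ≤ phiPair t := by
  unfold phiPair; split <;> positivity

lemma phiPair_le_one (t : ℕ) : phiPair t ≤ 1 := by
  have : (0:ℝ) ≤ t := Nat.cast_nonneg t
  unfold phiPair; split
  · rw [div_le_one (by positivity)]; linarith
  · rw [div_le_one (by positivity)]; linarith

lemma phiPair_antitone : Antitone phiPair := by
  apply antitone_nat_of_succ_le
  intro t
  have ht : (0:ℝ) ≤ t := Nat.cast_nonneg t
  unfold phiPair
  rcases Nat.even_or_odd t with h | h
  · have h1 : ¬ Even (t + 1) := by simp [Nat.even_add_one, h]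
    simp only [h, h1, if_true, if_false]
    push_cast
    apply one_div_le_one_div_of_le <;> linarith
  · have h0 : ¬ Even t := Nat.not_even_iff_odd.2 h
    have h1 : Even (t + 1) := by simpa [Nat.even_add_one] using h0
    simp only [h0, h1, if_true, if_false]
    push_cast
    apply le_of_eq; ring_nf

lemma phiPair_measurable : Measurable phiPair := measurable_from_top

lemma integrable_phiPair_comp {α : Type*} [MeasurableSpace α] (ν : Measure α)
    [IsProbabilityMeasure ν] (g : α → ℕ) (hg : Measurable g) :
    Integrable (fun a => phiPair (g a)) ν := by
  apply Integrable.mono' (integrable_const (1:ℝ))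
    ((phiPair_measurable.comp hg).aestronglyMeasurable)
  filter_upwards with a
  simp only [Function.comp]
  rw [Real.norm_eq_abs, abs_of_nonneg (phiPair_nonneg _)]
  exact phiPair_le_one _

lemma exp_series (x : ℝ) : ∑' n : ℕ, x ^ n / (Nat.factorial n : ℝ) = Real.exp x := by
  rw [Real.exp_eq_exp_ℝ, NormedSpace.exp_eq_tsum_div]

lemma exp_summable (x : ℝ) : Summable (fun n : ℕ => x ^ n / (Nat.factorial n : ℝ)) :=
  Real.summable_pow_div_factorial x

lemma exp_summable1 (x : ℝ) :
    Summable (fun n : ℕ => x ^ (n + 1) / (Nat.factorial (n + 1) : ℝ)) :=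
  (summable_nat_add_iff 1).2 (exp_summable x)

lemma exp_summable2 (x : ℝ) :
    Summable (fun n : ℕ => x ^ (n + 2) / (Nat.factorial (n + 2) : ℝ)) :=
  (summable_nat_add_iff 2).2 (exp_summable x)

lemma exp_series1 (x : ℝ) :
    ∑' n : ℕ, x ^ (n + 1) / (Nat.factorial (n + 1) : ℝ) = Real.exp x - 1 := by
  have h := Summable.tsum_eq_zero_add (exp_summable x)
  rw [exp_series x] at h
  norm_num at h
  linarith [h]

lemma exp_series2 (x : ℝ) :
    ∑' n : ℕ, x ^ (n + 2) / (Nat.factorial (n + 2) : ℝ) = Real.exp x - 1 - x := by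
  have h := Summable.tsum_eq_zero_add (exp_summable1 x)
  rw [exp_series1 x] at h
  norm_num at h
  have : ∑' n : ℕ, x ^ (n + 1 + 1) / (Nat.factorial (n + 1 + 1) : ℝ)
      = ∑' n : ℕ, x ^ (n + 2) / (Nat.factorial (n + 2) : ℝ) := by
    apply tsum_congr; intro n; norm_num
  rw [this] at h
  linarith [h]

lemma exp_seriesS1 (x : ℝ) :
    ∑' n : ℕ, x ^ (n + 2) / (Nat.factorial (n + 1) : ℝ) = x * (Real.exp x - 1) := by
  have : ∀ n : ℕ, x ^ (n + 2) / (Nat.factorial (n + 1) : ℝ)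
      = x * (x ^ (n + 1) / (Nat.factorial (n + 1) : ℝ)) := by
    intro n; rw [pow_succ]; ring
  rw [tsum_congr this, tsum_mul_left, exp_series1]

lemma summable_S1 (x : ℝ) :
    Summable (fun n : ℕ => x ^ (n + 2) / (Nat.factorial (n + 1) : ℝ)) := by
  have : ∀ n : ℕ, x ^ (n + 2) / (Nat.factorial (n + 1) : ℝ)
      = x * (x ^ (n + 1) / (Nat.factorial (n + 1) : ℝ)) := by
    intro n; rw [pow_succ]; ring
  exact (funext this : _) ▸ (exp_summable1 x).mul_left x

lemma phi_term_eq (lam : ℝ) (hlam : 0 < lam) (n : ℕ) :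
    Real.exp (-lam) * lam ^ n / (Nat.factorial n : ℝ) * phiPair n
      = (Real.exp (-lam) / lam ^ 2)
        * (lam ^ (n + 2) / (Nat.factorial (n + 1) : ℝ)
          - (1 / 2) * (lam ^ (n + 2) / (Nat.factorial (n + 2) : ℝ))
          + (1 / 2) * ((-lam) ^ (n + 2) / (Nat.factorial (n + 2) : ℝ))) := by
  have hfac : (0:ℝ) < (Nat.factorial n : ℝ) := by positivity
  have hfac1 : ((Nat.factorial (n+1) : ℕ) : ℝ) = (n + 1 : ℝ) * (Nat.factorial n : ℝ) := by
    rw [Nat.factorial_succ]; push_cast; ring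
  have hfac2 : ((Nat.factorial (n+2) : ℕ) : ℝ)
      = (n + 2 : ℝ) * ((n + 1 : ℝ) * (Nat.factorial n : ℝ)) := by
    rw [Nat.factorial_succ, ← hfac1]; push_cast; ring
  have hn1 : (0:ℝ) < (n:ℝ) + 1 := by positivity
  have hn2 : (0:ℝ) < (n:ℝ) + 2 := by positivity
  unfold phiPair
  rcases Nat.even_or_odd n with h | h
  · have hneg : (-lam) ^ (n + 2) = lam ^ (n + 2) := by
      rw [neg_pow]
      have : Even (n + 2) := h.add (by decide)
      rw [this.neg_one_pow, one_mul]
    simp only [h, if_true, hneg]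
    rw [hfac1]
    field_simp
    ring
  · have hneg : (-lam) ^ (n + 2) = -(lam ^ (n + 2)) := by
      rw [neg_pow]
      have : Odd (n + 2) := h.add_even (by decide)
      rw [this.neg_one_pow]; ring
    have h0 : ¬ Even n := Nat.not_even_iff_odd.2 h
    simp only [h0, if_false, hneg]
    rw [hfac1, hfac2]
    field_simp
    ring

lemma tsum_phi (lam : ℝ) (hlam : 0 < lam) :
    ∑' n : ℕ, Real.exp (-lam) * lam ^ n / (Nat.factorial n : ℝ) * phiPair n
      = 1 / lam - (1 - Real.exp (-(2 * lam))) / (2 * lam ^ 2) := by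
  rw [tsum_congr (phi_term_eq lam hlam), tsum_mul_left]
  have hs1 := summable_S1 lam
  have hs2 := (exp_summable2 lam).mul_left (1/2 : ℝ)
  have hs3 := (exp_summable2 (-lam)).mul_left (1/2 : ℝ)
  rw [Summable.tsum_add (hs1.sub hs2) hs3, Summable.tsum_sub hs1 hs2, tsum_mul_left, tsum_mul_left,
    exp_seriesS1, exp_series2, exp_series2]
  have hEF : Real.exp (-lam) * Real.exp lam = 1 := by
    rw [← Real.exp_add]; simp
  have hFF : Real.exp (-lam) * Real.exp (-lam) = Real.exp (-(2 * lam)) := by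
    rw [← Real.exp_add]; ring_nf
  have hl : lam ≠ 0 := ne_of_gt hlam
  field_simp
  have h2 : Real.exp (-(2 * lam)) = Real.exp (-(lam * 2)) := by ring_nf
  linear_combination (2*lam-1)*hEF + hFF + h2

theorem domination_phi_bound {Ω : Type*} [MeasurableSpace Ω] (μ : Measure Ω)
    [IsProbabilityMeasure μ] (X Y : Ω → ℕ) (hX : Measurable X) (hY : Measurable Y)
    (hcoup : ∀ ω, X ω ≤ Y ω) (lam : ℝ) (hlam : 0 < lam)
    (hYlaw : ∀ n : ℕ, μ {ω | Y ω = n}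
      = ENNReal.ofReal (Real.exp (-lam) * lam ^ n / (Nat.factorial n : ℝ))) :
    (∫ ω, phiPair (Y ω) ∂μ) ≤ ∫ ω, phiPair (X ω) ∂μ ∧
      (∫ ω, phiPair (Y ω) ∂μ)
        = 1 / lam - (1 - Real.exp (-(2 * lam))) / (2 * lam ^ 2) := by
  constructor
  · apply integral_mono (integrable_phiPair_comp μ Y hY) (integrable_phiPair_comp μ X hX)
    intro ω
    exact phiPair_antitone (hcoup ω)
  · have : IsProbabilityMeasure (μ.map Y) := Measure.isProbabilityMeasure_map hY.aemeasurable
    have hmeq : ∫ ω, phiPair (Y ω) ∂μ = ∫ n, phiPair n ∂(μ.map Y) :=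
      (integral_map hY.aemeasurable phiPair_measurable.aestronglyMeasurable).symm
    have hint : Integrable phiPair (μ.map Y) := integrable_phiPair_comp (μ.map Y) id measurable_id
    rw [hmeq, integral_countable' hint]
    have hpt : ∀ n : ℕ, ((μ.map Y) {n}).toReal • phiPair n
        = Real.exp (-lam) * lam ^ n / (Nat.factorial n : ℝ) * phiPair n := by
      intro n
      have h1 : (μ.map Y) {n} = μ {ω | Y ω = n} := by
        rw [Measure.map_apply hY (measurableSet_singleton n)]
        rfl
      rw [h1, hYlaw n, ENNReal.toReal_ofReal (by positivity), smul_eq_mul]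
    simp only [measureReal_def]
    rw [tsum_congr hpt]
    exact tsum_phi lam hlam
end
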